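/- arXiv:1209.3729 — 3 statements merged into one kernel-verified Lean document; each statement's English description precedes it below -/
import Mathlib

section
/- Let m and n be positive integers with 3 ≤ m and m < √n. Then ∑_{k=m}^{n} 1/log k < n/log n + 4n/log² n + (√n − 2(m−1))/log² m. -/
lemma my_integral_one_div_log_le (a b : ℝ) (ha : 3 ≤ a) (hab : a ≤ b) :
    ∫ x in a..b, 1 / Real.log x ≤
      b / Real.log b - a / Real.log a + (b - a) / (Real.log a) ^ 2 := by
  have hla : 1 < Real.log a := by
    have : Real.log 3 ≤ Real.log a := Real.log_le_log (by norm_num) ha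
    have h3 : 1 < Real.log 3 := by
      rw [← Real.exp_lt_exp (x := 1), Real.exp_log (by norm_num)] at *
      calc Real.exp 1 < 2.7182818286 := Real.exp_one_lt_d9
        _ < 3 := by norm_num
    linarith
  have hlog : ∀ x ∈ Set.Icc a b, 1 < Real.log x := by
    intro x hx
    have : Real.log a ≤ Real.log x := Real.log_le_log (by linarith [hx.1]) hx.1
    linarith
  have hcont1 : ContinuousOn (fun x => 1 / Real.log x) (Set.Icc a b) := by
    intro x hx
    have hx0 : x ≠ 0 := by have := hx.1; intro h; rw [h] at this; linarith
    have hl : Real.log x ≠ 0 := by have := hlog x hx; linarith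
    exact ((continuousAt_const.div (Real.continuousAt_log hx0) hl)).continuousWithinAt
  have hcont2 : ContinuousOn (fun x => 1 / (Real.log x) ^ 2) (Set.Icc a b) := by
    intro x hx
    have hx0 : x ≠ 0 := by have := hx.1; intro h; rw [h] at this; linarith
    have hl : (Real.log x) ^ 2 ≠ 0 := by have := hlog x hx; positivity
    exact ((continuousAt_const.div ((Real.continuousAt_log hx0).pow 2) hl)).continuousWithinAt
  have hint1 : IntervalIntegrable (fun x => 1 / Real.log x) MeasureTheory.volume a b := by
    apply ContinuousOn.intervalIntegrable; rwa [Set.uIcc_of_le hab]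
  have hint2 : IntervalIntegrable (fun x => 1 / (Real.log x) ^ 2) MeasureTheory.volume a b := by
    apply ContinuousOn.intervalIntegrable; rwa [Set.uIcc_of_le hab]
  have hderiv : ∀ x ∈ Set.uIcc a b,
      HasDerivAt (fun y => y / Real.log y) (1 / Real.log x - 1 / (Real.log x) ^ 2) x := by
    intro x hx
    rw [Set.uIcc_of_le hab] at hx
    have hx0 : x ≠ 0 := by have := hx.1; intro h; rw [h] at this; linarith
    have hl : Real.log x ≠ 0 := by have := hlog x hx; linarith
    have := (hasDerivAt_id x).div (Real.hasDerivAt_log hx0) hl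
    refine this.congr_deriv ?_
    simp only [id]
    field_simp
  have hFTC : ∫ x in a..b, (1 / Real.log x - 1 / (Real.log x) ^ 2) =
      b / Real.log b - a / Real.log a := by
    apply intervalIntegral.integral_eq_sub_of_hasDerivAt hderiv
    apply (hint1.sub hint2)
  rw [intervalIntegral.integral_sub hint1 hint2] at hFTC
  have hmono : ∫ x in a..b, 1 / (Real.log x) ^ 2 ≤ (b - a) / (Real.log a) ^ 2 := by
    have := intervalIntegral.integral_mono_on hab hint2
      (intervalIntegrable_const (c := 1 / (Real.log a) ^ 2)) (fun x hx => by
        have h1 := hlog x hx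
        have h2 : Real.log a ≤ Real.log x := Real.log_le_log (by linarith [hx.1]) hx.1
        apply one_div_le_one_div_of_le (by positivity)
        nlinarith)
    rw [intervalIntegral.integral_const, smul_eq_mul] at this
    calc ∫ x in a..b, 1 / (Real.log x) ^ 2 ≤ (b - a) * (1 / (Real.log a) ^ 2) := this
      _ = (b - a) / (Real.log a) ^ 2 := by ring
  linarith

theorem sum_one_div_log_lt (m n : ℕ) (hn : 0 < n) (hm : 3 ≤ m) (hmn : (m : ℝ) < Real.sqrt n) :
    ∑ k ∈ Finset.Icc m n, 1 / Real.log k <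
      (n : ℝ) / Real.log n + 4 * n / (Real.log n) ^ 2 +
        (Real.sqrt n - 2 * ((m : ℝ) - 1)) / (Real.log m) ^ 2 := by
  have key := my_integral_one_div_log_le
  set s := Real.sqrt n with hs
  have hm3 : (3 : ℝ) ≤ (m : ℝ) := by exact_mod_cast hm
  have hs3 : (3 : ℝ) < s := lt_of_le_of_lt hm3 hmn
  have hn1 : (1 : ℝ) ≤ (n : ℝ) := by exact_mod_cast hn
  have hsn : s ≤ (n : ℝ) := (Real.sqrt_le_left (by positivity)).mpr (by nlinarith)
  have hmn' : m < n := by exact_mod_cast lt_of_lt_of_le hmn hsn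
  have hlm : 1 < Real.log m := by
    have h1 : Real.log 3 ≤ Real.log m := Real.log_le_log (by norm_num) hm3
    have h3 : 1 < Real.log 3 := by
      rw [show (1:ℝ) = Real.log (Real.exp 1) by rw [Real.log_exp]]
      apply Real.log_lt_log (Real.exp_pos 1)
      calc Real.exp 1 < 2.7182818286 := Real.exp_one_lt_d9
        _ < 3 := by norm_num
    linarith
  have hln : 0 < Real.log n := Real.log_pos (by linarith)
  have hanti : AntitoneOn (fun x : ℝ => 1 / Real.log x) (Set.Icc (m : ℝ) (n : ℝ)) := by
    intro x hx y hy hxy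
    have hlx : 1 < Real.log x := by
      have : Real.log m ≤ Real.log x := Real.log_le_log (by linarith [hx.1]) hx.1
      linarith
    have : Real.log x ≤ Real.log y := Real.log_le_log (by linarith [hx.1]) hxy
    exact one_div_le_one_div_of_le (by linarith) this
  have hsum : ∑ k ∈ Finset.Icc m n, 1 / Real.log k
      = 1 / Real.log m + ∑ i ∈ Finset.Ico m n, 1 / Real.log ((i + 1 : ℕ) : ℝ) := by
    have h1 : Finset.Icc m n = insert m (Finset.Icc (m + 1) n) := by
      ext k; simp [Finset.mem_Icc, Finset.mem_insert]; omega
    rw [h1, Finset.sum_insert (by simp)]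
    congr 1
    rw [show Finset.Icc (m+1) n = Finset.Ico (m+1) (n+1) by rw [Finset.Ico_add_one_right_eq_Icc]]
    rw [← Finset.sum_Ico_add' (fun k : ℕ => 1 / Real.log (k : ℝ)) m n 1]
  have hle : ∑ i ∈ Finset.Ico m n, 1 / Real.log ((i + 1 : ℕ) : ℝ)
      ≤ ∫ x in (m : ℝ)..(n : ℝ), 1 / Real.log x :=
    AntitoneOn.sum_le_integral_Ico (le_of_lt hmn') hanti
  have hci : ∀ a b : ℝ, (m:ℝ) ≤ a → a ≤ b → b ≤ n → IntervalIntegrable (fun x => 1 / Real.log x) MeasureTheory.volume a b := by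
    intro a b ha hab hb
    apply ContinuousOn.intervalIntegrable
    intro x hx
    rw [Set.uIcc_of_le hab] at hx
    have hx3 : (3:ℝ) ≤ x := by linarith [hx.1]
    have hx0 : x ≠ 0 := by linarith
    have hl : Real.log x ≠ 0 := by
      have h1 : Real.log 3 ≤ Real.log x := Real.log_le_log (by norm_num) hx3
      have h0 : (0:ℝ) < Real.log 3 := Real.log_pos (by norm_num)
      linarith
    exact ((continuousAt_const.div (Real.continuousAt_log hx0) hl)).continuousWithinAt
  have hsplit : (∫ x in (m:ℝ)..s, 1 / Real.log x) + ∫ x in s..(n:ℝ), 1 / Real.log x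
      = ∫ x in (m:ℝ)..(n:ℝ), 1 / Real.log x :=
    intervalIntegral.integral_add_adjacent_intervals
      (hci _ _ le_rfl hmn.le hsn) (hci _ _ hmn.le hsn le_rfl)
  have hb1 := key (m:ℝ) s hm3 hmn.le
  have hb2 := key s (n:ℝ) hs3.le hsn
  have hlogs : Real.log s = Real.log n / 2 := Real.log_sqrt (Nat.cast_nonneg n)
  set L := Real.log (m:ℝ) with hL'
  set M := Real.log (n:ℝ) with hM'
  have hL : 0 < L := by linarith
  have hM : 0 < M := hln
  have hs0 : 0 < s := by linarith
  have key2 : (1 - (m:ℝ)) / L + ((m:ℝ) - 2) / L ^ 2 < 4 * s / M ^ 2 := by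
    have h0 : (1 - (m:ℝ)) * L + ((m:ℝ) - 2) < 0 := by nlinarith
    have heq : (1 - (m:ℝ)) / L + ((m:ℝ) - 2) / L ^ 2 = ((1 - (m:ℝ)) * L + ((m:ℝ) - 2)) / L ^ 2 := by
      field_simp
    have hneg : ((1 - (m:ℝ)) * L + ((m:ℝ) - 2)) / L ^ 2 < 0 :=
      div_neg_of_neg_of_pos h0 (by positivity)
    have hpos : 0 < 4 * s / M ^ 2 := by positivity
    rw [heq]; linarith
  have hfin : 1 / L + (s / Real.log s - (m:ℝ) / L + (s - (m:ℝ)) / L ^ 2)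
      + ((n:ℝ) / M - s / Real.log s + ((n:ℝ) - s) / (Real.log s) ^ 2)
      < (n : ℝ) / M + 4 * n / M ^ 2 + (s - 2 * ((m : ℝ) - 1)) / L ^ 2 := by
    rw [hlogs]
    have eqd : ((n : ℝ) / M + 4 * n / M ^ 2 + (s - 2 * ((m : ℝ) - 1)) / L ^ 2)
        - (1 / L + (s / (M/2) - (m:ℝ) / L + (s - (m:ℝ)) / L ^ 2)
          + ((n:ℝ) / M - s / (M/2) + ((n:ℝ) - s) / (M/2) ^ 2))
        = 4 * s / M ^ 2 - ((1 - (m:ℝ)) / L + ((m:ℝ) - 2) / L ^ 2) := by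
      field_simp
      ring
    linarith [key2, eqd]
  calc ∑ k ∈ Finset.Icc m n, 1 / Real.log k
      ≤ 1 / L + ((∫ x in (m:ℝ)..s, 1 / Real.log x) + ∫ x in s..(n:ℝ), 1 / Real.log x) := by
        rw [hsum, hsplit]; linarith
    _ ≤ 1 / L + ((s / Real.log s - (m:ℝ) / L + (s - (m:ℝ)) / L ^ 2)
        + ((n:ℝ) / M - s / Real.log s + ((n:ℝ) - s) / (Real.log s) ^ 2)) := by linarith
    _ < _ := by linarith [hfin]
end

section
/- Let m and n be real numbers with 3 ≤ m ≤ n. Then ∫_m^n dx/log x ≥ n/log n − m/log m + (n − m)/log² n. -/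
open Real intervalIntegral

theorem integral_one_div_log_ge (m n : ℝ) (hm : 3 ≤ m) (hmn : m ≤ n) :
    ∫ x in m..n, 1 / Real.log x ≥
      n / Real.log n - m / Real.log m + (n - m) / (Real.log n) ^ 2 := by
  have hicc : Set.uIcc m n = Set.Icc m n := Set.uIcc_of_le hmn
  have hlog : ∀ x ∈ Set.Icc m n, 1 < Real.log x := by
    intro x hx
    have hx3 : (3:ℝ) ≤ x := le_trans hm hx.1
    have h3 : 1 < Real.log 3 := by
      rw [← Real.log_exp 1]
      apply Real.log_lt_log (Real.exp_pos 1)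
      have := Real.exp_one_lt_d9; linarith
    exact lt_of_lt_of_le h3 (Real.log_le_log (by norm_num) hx3)
  have hx0 : ∀ x ∈ Set.Icc m n, x ≠ 0 := fun x hx => by
    have : (3:ℝ) ≤ x := le_trans hm hx.1; linarith
  have hlogne : ∀ x ∈ Set.Icc m n, Real.log x ≠ 0 := fun x hx => by
    have := hlog x hx; linarith
  -- continuity
  have hcont1 : ContinuousOn (fun x => 1 / Real.log x) (Set.Icc m n) := by
    exact continuousOn_const.div (Real.continuousOn_log.comp continuousOn_id
      (fun x hx => hx0 x hx)) hlogne
  have hcont2 : ContinuousOn (fun x => 1 / (Real.log x) ^ 2) (Set.Icc m n) := by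
    apply continuousOn_const.div
    · exact (Real.continuousOn_log.comp continuousOn_id (fun x hx => hx0 x hx)).pow 2
    · intro x hx; exact pow_ne_zero 2 (hlogne x hx)
  have hint1 : IntervalIntegrable (fun x => 1 / Real.log x) MeasureTheory.volume m n := by
    apply ContinuousOn.intervalIntegrable; rwa [hicc]
  have hint2 : IntervalIntegrable (fun x => 1 / (Real.log x) ^ 2) MeasureTheory.volume m n := by
    apply ContinuousOn.intervalIntegrable; rwa [hicc]
  -- FTC
  have hderiv : ∀ x ∈ Set.Icc m n,
      HasDerivAt (fun y => y / Real.log y) (1 / Real.log x - 1 / (Real.log x) ^ 2) x := by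
    intro x hx
    have h : HasDerivAt (fun y => y / Real.log y) ((1 * Real.log x - x * x⁻¹) / Real.log x ^ 2) x :=
      (hasDerivAt_id x).div (Real.hasDerivAt_log (hx0 x hx)) (hlogne x hx)
    convert h using 1
    have hne := hlogne x hx
    have hxne := hx0 x hx
    field_simp
  have key : ∫ x in m..n, (1 / Real.log x - 1 / (Real.log x) ^ 2) =
      n / Real.log n - m / Real.log m := by
    apply intervalIntegral.integral_eq_sub_of_hasDerivAt
    · intro x hx; exact hderiv x (hicc ▸ hx)
    · exact hint1.sub hint2
  rw [intervalIntegral.integral_sub hint1 hint2] at key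
  have hmono : (n - m) / (Real.log n) ^ 2 ≤ ∫ x in m..n, 1 / (Real.log x) ^ 2 := by
    have hn : n ∈ Set.Icc m n := ⟨hmn, le_refl n⟩
    have hcalc : ∫ x in m..n, (1 / (Real.log n) ^ 2 : ℝ) = (n - m) * (1 / (Real.log n) ^ 2) := by
      simp [intervalIntegral.integral_const, smul_eq_mul]
    have := intervalIntegral.integral_mono_on hmn
      (_root_.intervalIntegrable_const (c := 1 / (Real.log n) ^ 2)) hint2
      (fun x hx => by
        have h1 := hlog x hx
        have h2 : Real.log x ≤ Real.log n := Real.log_le_log (by linarith [hx.1, hm]) hx.2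
        have h3 : (0:ℝ) < Real.log x := by linarith
        apply one_div_le_one_div_of_le (by positivity)
        exact pow_le_pow_left₀ h3.le h2 2)
    rw [hcalc] at this
    calc (n - m) / (Real.log n) ^ 2 = (n - m) * (1 / (Real.log n) ^ 2) := by ring
      _ ≤ _ := this
  linarith [key, hmono]
end

section
/- Let m and n be integers with 3 ≤ m ≤ n. Then ∑_{k=m}^{n} (log k + log log k − 1) ≤ log n + log log n − (n − m + 1) + n(log n + log log n − 1) − m(log m + log log m − 1) − n/log n + m/log m − (n − m)/log² n. -/
open Real Finset

noncomputable def Faux (x : ℝ) : ℝ := Real.log x + Real.log (Real.log x) - 1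
noncomputable def Gaux (x : ℝ) : ℝ := x * Faux x - x / Real.log x

lemma log_gt_one {x : ℝ} (hx : 3 ≤ x) : 1 < Real.log x := by
  have h3 : Real.exp 1 < 3 := by
    have := Real.exp_one_lt_d9; linarith
  calc 1 = Real.log (Real.exp 1) := (Real.log_exp 1).symm
  _ < Real.log x := Real.log_lt_log (Real.exp_pos 1) (by linarith)

lemma hasDerivAt_Gaux {x : ℝ} (hx : 3 ≤ x) :
    HasDerivAt Gaux (Faux x + 1 + 1 / (Real.log x)^2) x := by
  have hx0 : x ≠ 0 := by linarith
  have hlx : 1 < Real.log x := log_gt_one hx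
  have hlx0 : Real.log x ≠ 0 := by linarith
  have h1 : HasDerivAt Real.log (1/x) x := by
    simpa [one_div] using Real.hasDerivAt_log hx0
  have h2 : HasDerivAt (fun y => Real.log (Real.log y)) (1/Real.log x * (1/x)) x := by
    have := (Real.hasDerivAt_log hlx0).comp x h1
    rw [one_div (Real.log x)]; exact this
  have h3 : HasDerivAt Faux (1/x + 1/Real.log x * (1/x)) x := by
    unfold Faux
    exact (h1.add h2).sub_const 1
  have h4 : HasDerivAt (fun y => y * Faux y)
      (1 * Faux x + x * (1/x + 1/Real.log x * (1/x))) x :=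
    (hasDerivAt_id x).mul h3
  have h5 : HasDerivAt (fun y => y / Real.log y)
      ((1 * Real.log x - x * (1/x)) / (Real.log x)^2) x :=
    (hasDerivAt_id x).div h1 hlx0
  have h6 := h4.sub h5
  refine h6.congr_deriv ?_
  unfold Faux
  field_simp
  ring

lemma Faux_mono {a x : ℝ} (ha : 3 ≤ a) (hax : a ≤ x) : Faux a ≤ Faux x := by
  have h0 : (0:ℝ) < a := by linarith
  have h1 : Real.log a ≤ Real.log x := Real.log_le_log h0 hax
  have h2 : Real.log (Real.log a) ≤ Real.log (Real.log x) :=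
    Real.log_le_log (by linarith [log_gt_one ha]) h1
  unfold Faux; linarith

lemma key {L a : ℝ} (ha : 3 ≤ a) (hL : Real.log (a+1) ≤ L) :
    Faux a ≤ (Gaux (a+1) - (a+1) - (a+1)/L^2) - (Gaux a - a - a/L^2) := by
  set ψ : ℝ → ℝ := fun x => Gaux x - x - x/L^2 - Faux a * x with hψ
  have hd : ∀ x ∈ Set.Icc a (a+1),
      HasDerivAt ψ (Faux x + 1 + 1/(Real.log x)^2 - 1 - 1/L^2 - Faux a) x := by
    intro x hx
    have hx3 : 3 ≤ x := le_trans ha hx.1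
    have := ((((hasDerivAt_Gaux hx3).sub (hasDerivAt_id x)).sub
      ((hasDerivAt_id x).div_const (L^2))).sub ((hasDerivAt_id x).const_mul (Faux a)))
    refine this.congr_deriv ?_
    ring
  have hmono : MonotoneOn ψ (Set.Icc a (a+1)) := by
    apply monotoneOn_of_deriv_nonneg (convex_Icc a (a+1))
    · exact fun x hx => (hd x hx).continuousAt.continuousWithinAt
    · intro x hx
      rw [interior_Icc] at hx
      exact ((hd x (Set.mem_Icc_of_Ioo hx)).differentiableAt).differentiableWithinAt
    · intro x hx
      rw [interior_Icc] at hx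
      have hx' := Set.mem_Icc_of_Ioo hx
      rw [(hd x hx').deriv]
      have hx3 : 3 ≤ x := le_trans ha hx'.1
      have hF : Faux a ≤ Faux x := Faux_mono ha hx'.1
      have hlx : 1 < Real.log x := log_gt_one hx3
      have hlogle : Real.log x ≤ L := by
        have : Real.log x ≤ Real.log (a+1) :=
          Real.log_le_log (by linarith) hx'.2
        linarith
      have hsq : (Real.log x)^2 ≤ L^2 := by nlinarith
      have h2 : 1/L^2 ≤ 1/(Real.log x)^2 :=
        one_div_le_one_div_of_le (by nlinarith) hsq
      linarith
  have := hmono (Set.left_mem_Icc.mpr (by linarith)) (Set.right_mem_Icc.mpr (by linarith)) (by linarith)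
  simp only [hψ] at this
  nlinarith [this]

lemma aux (N m : ℕ) (hm : 3 ≤ m) :
    ∀ n : ℕ, m ≤ n → n ≤ N →
      ∑ k ∈ Icc m n, Faux k ≤
        (Gaux n - n - n/(Real.log N)^2) - (Gaux m - m - m/(Real.log N)^2) + Faux n := by
  intro n
  induction n with
  | zero => intro h1 _; omega
  | succ n ih =>
    intro h1 h2
    rcases eq_or_lt_of_le h1 with h | h
    · rw [← h]
      simp
    · have hmn : m ≤ n := by omega
      have hsum : ∑ k ∈ Icc m (n+1), Faux k = (∑ k ∈ Icc m n, Faux k) + Faux (n+1) := by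
        rw [Finset.sum_Icc_succ_top (by omega)]
        push_cast
        ring
      have ihn := ih hmn (by omega)
      have hn3 : (3:ℝ) ≤ (n:ℝ) := by exact_mod_cast le_trans hm hmn
      have hL : Real.log ((n:ℝ)+1) ≤ Real.log N := by
        apply Real.log_le_log (by linarith)
        have : (n:ℝ)+1 ≤ (N:ℝ) := by exact_mod_cast h2
        linarith
      have hkey := key hn3 hL
      have hcast : ((n+1 : ℕ) : ℝ) = (n:ℝ) + 1 := by push_cast; ring
      rw [hsum, hcast]
      linarith

theorem sum_log_add_loglog_sub_one_le (m n : ℕ) (hm : 3 ≤ m) (hmn : m ≤ n) :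
    ∑ k ∈ Finset.Icc m n, (Real.log k + Real.log (Real.log k) - 1) ≤
      Real.log n + Real.log (Real.log n) - ((n : ℝ) - m + 1) +
        (n : ℝ) * (Real.log n + Real.log (Real.log n) - 1) -
          (m : ℝ) * (Real.log m + Real.log (Real.log m) - 1) -
            (n : ℝ) / Real.log n + (m : ℝ) / Real.log m -
              ((n : ℝ) - m) / (Real.log n) ^ 2 := by
  have h := aux n m hm n hmn le_rfl
  have hsum : ∑ k ∈ Finset.Icc m n, (Real.log k + Real.log (Real.log k) - 1)
      = ∑ k ∈ Finset.Icc m n, Faux k := by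
    simp [Faux]
  have heq : ((Gaux n - n - n/(Real.log n)^2) - (Gaux m - m - m/(Real.log n)^2) + Faux n)
      = Real.log n + Real.log (Real.log n) - ((n : ℝ) - m + 1) +
        (n : ℝ) * (Real.log n + Real.log (Real.log n) - 1) -
          (m : ℝ) * (Real.log m + Real.log (Real.log m) - 1) -
            (n : ℝ) / Real.log n + (m : ℝ) / Real.log m -
              ((n : ℝ) - m) / (Real.log n) ^ 2 := by
    unfold Gaux Faux
    ring
  rw [hsum]
  linarith [h, heq.le, heq.ge]
end
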